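/- Let λ be Lebesgue measure on [0,1], let E := {(x,y) ∈ [0,1]² : y > x}, and let Ē := {(x,y) ∈ [0,1]² : y ≥ x}. For a measurable S ⊆ [0,1]², let Π^S be the set of finite Borel measures π on [0,1]² whose first marginal is λ and which satisfy π(Sᶜ) = 0, and define J(π) := ∫_0^1 ((dπ_1/dλ)(y))² dy when the second marginal π_1 of π is absolutely continuous with respect to λ, and J(π) := +∞ otherwise. Then: (1) inf{J(π) : π ∈ Π^E} = 1, and this infimum is not attained; (2) for each ε ∈ (0, 1/2) there exists π_ε ∈ Π^E with J(π_ε) = 1 + (7/6)ε, and π_ε converges weakly as ε → 0 to the diagonal plan π^Δ := (id, id)_#λ; (3) π^Δ ∈ Π^{Ē}, J(π^Δ) = 1, and min{J(π) : π ∈ Π^{Ē}} = 1. -/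

import Mathlib

/- STATEMENT 19: Failure of attainment on the open relation `{y > x}` in `[0,1]²`, and
attainment on its closure (Proposition `closed-support-needed`). -/

open MeasureTheory Filter
open scoped ENNReal NNReal

noncomputable section

/-- The unit interval as a subtype. -/
abbrev UnitSq := (Set.Icc (0 : ℝ) 1)

/-- Lebesgue measure on `[0,1]`, as a measure on the subtype. -/
def lam : Measure (Set.Icc (0 : ℝ) 1) := (volume : Measure ℝ).comap Subtype.val

/-- The open relation `{(x,y) : y > x}`. -/
def Eopen : Set (UnitSq × UnitSq) := {p | (p.1 : ℝ) < (p.2 : ℝ)}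

/-- The closed relation `{(x,y) : y ≥ x}`. -/
def Eclosed : Set (UnitSq × UnitSq) := {p | (p.1 : ℝ) ≤ (p.2 : ℝ)}

/-- `Π^S`: finite plans with first marginal `λ`, concentrated on `S`. -/
def PlanS (S : Set (UnitSq × UnitSq)) : Set (Measure (UnitSq × UnitSq)) :=
  {π | IsFiniteMeasure π ∧ π.map Prod.fst = lam ∧ π Sᶜ = 0}

open Classical in
/-- The objective `J(π) = ∫ (dπ₁/dλ)² dλ` if `π₁ ≪ λ`, and `+∞` otherwise. -/
def J (π : Measure (UnitSq × UnitSq)) : ℝ≥0∞ :=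
  if (π.map Prod.snd) ≪ lam then
    ∫⁻ y, ((π.map Prod.snd).rnDeriv lam y) ^ 2 ∂lam
  else ⊤

/-- The diagonal plan `π^Δ = (id, id)_# λ`. -/
def diagPlan : Measure (UnitSq × UnitSq) := lam.map (fun x => (x, x))

/-!
Since the first marginal is the uniform law `λ`, the density `ρ` of the second marginal has
`∫ ρ dλ = 1`; integrating `2ρ ≤ ρ² + 1` gives `J ≥ 1`, with equality only if `ρ = 1` a.e., i.e.
only if both marginals are `λ`. No plan concentrated on `{y > x}` has equal marginals, because
`∫ (y - x) dπ` would be both zero and positive.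

The graphs of the contractions `x ↦ 1 - c + c x` towards `1` (`0 < c < 1`) lie in `{y > x}` off
the null set `{x = 1}` and push `λ` to the uniform law on `[1 - c, 1]`, of density `1 / c`; so
`J = 1 / c`, and these plans converge to the diagonal plan as `c → 1`. The family of (2) is
`c = (1 + 7ε/6)⁻¹`.
-/

open scoped Topology BoundedContinuousFunction

namespace ENNReal

lemma two_mul_le_sq_add_one (a : ℝ≥0∞) : 2 * a ≤ a ^ 2 + 1 := by
  rcases eq_or_ne a ∞ with rfl | ha
  · simp
  lift a to ℝ≥0 using ha
  have : 2 * (a : ℝ) ≤ (a : ℝ) ^ 2 + 1 := by nlinarith [sq_nonneg ((a : ℝ) - 1)]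
  exact_mod_cast this

lemma eq_one_of_two_mul_eq_sq_add_one {a : ℝ≥0∞} (ha : a ≠ ∞) (h : 2 * a = a ^ 2 + 1) :
    a = 1 := by
  lift a to ℝ≥0 using ha
  have h' : 2 * (a : ℝ) = (a : ℝ) ^ 2 + 1 := by exact_mod_cast h
  have : (a : ℝ) = 1 := by nlinarith [sq_nonneg ((a : ℝ) - 1)]
  exact_mod_cast this

end ENNReal

section SecondMoment

variable {α : Type*} [MeasurableSpace α] {μ : Measure α} {g : α → ℝ≥0∞}

lemma lintegral_two_mul_of_lintegral_eq_one (h1 : ∫⁻ x, g x ∂μ = 1) :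
    ∫⁻ x, 2 * g x ∂μ = 1 + 1 := by
  rw [lintegral_const_mul' _ _ ENNReal.ofNat_ne_top, h1, mul_one, one_add_one_eq_two]

variable [IsProbabilityMeasure μ]

lemma lintegral_sq_add_one : ∫⁻ x, (g x ^ 2 + 1) ∂μ = ∫⁻ x, g x ^ 2 ∂μ + 1 := by
  rw [lintegral_add_right _ measurable_const, lintegral_const, measure_univ, mul_one]

lemma one_le_lintegral_sq_of_lintegral_eq_one (h1 : ∫⁻ x, g x ∂μ = 1) :
    1 ≤ ∫⁻ x, g x ^ 2 ∂μ := by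
  refine (ENNReal.add_le_add_iff_right ENNReal.one_ne_top).1 ?_
  calc 1 + 1 = ∫⁻ x, 2 * g x ∂μ := (lintegral_two_mul_of_lintegral_eq_one h1).symm
    _ ≤ ∫⁻ x, (g x ^ 2 + 1) ∂μ := lintegral_mono fun x => ENNReal.two_mul_le_sq_add_one (g x)
    _ = ∫⁻ x, g x ^ 2 ∂μ + 1 := lintegral_sq_add_one

lemma ae_eq_one_of_lintegral_sq_le_one (hg : AEMeasurable g μ) (h1 : ∫⁻ x, g x ∂μ = 1)
    (h2 : ∫⁻ x, g x ^ 2 ∂μ ≤ 1) : g =ᵐ[μ] 1 := by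
  have h2g : ∫⁻ x, 2 * g x ∂μ = 1 + 1 := lintegral_two_mul_of_lintegral_eq_one h1
  have heq : (fun x => 2 * g x) =ᵐ[μ] fun x => g x ^ 2 + 1 :=
    ae_eq_of_ae_le_of_lintegral_le (ae_of_all _ fun x => ENNReal.two_mul_le_sq_add_one (g x))
      (by simp [h2g]) ((hg.pow_const 2).add aemeasurable_const)
      (by rw [lintegral_sq_add_one, h2g]; gcongr)
  filter_upwards [heq, ae_lt_top' hg (h1 ▸ ENNReal.one_ne_top)] with x hx hfin
  exact ENNReal.eq_one_of_two_mul_eq_sq_add_one hfin.ne hx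

variable {ν : Measure α} [IsProbabilityMeasure ν]

lemma one_le_lintegral_rnDeriv_sq (hν : ν ≪ μ) : 1 ≤ ∫⁻ x, ν.rnDeriv μ x ^ 2 ∂μ :=
  one_le_lintegral_sq_of_lintegral_eq_one (by rw [Measure.lintegral_rnDeriv hν, measure_univ])

lemma eq_of_lintegral_rnDeriv_sq_le_one (hν : ν ≪ μ) (h2 : ∫⁻ x, ν.rnDeriv μ x ^ 2 ∂μ ≤ 1) :
    ν = μ :=
  (Measure.rnDeriv_eq_one_iff_eq hν).1 <| ae_eq_one_of_lintegral_sq_le_one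
    (Measure.measurable_rnDeriv ν μ).aemeasurable
    (by rw [Measure.lintegral_rnDeriv hν, measure_univ]) h2

end SecondMoment

lemma measurableEmbedding_coe_unitSq : MeasurableEmbedding (Subtype.val : UnitSq → ℝ) :=
  MeasurableEmbedding.subtype_coe measurableSet_Icc

lemma map_coe_lam : lam.map Subtype.val = volume.restrict (Set.Icc (0 : ℝ) 1) := by
  rw [lam, measurableEmbedding_coe_unitSq.map_comap, Subtype.range_coe]

instance : IsProbabilityMeasure lam :=
  ⟨by rw [lam, measurableEmbedding_coe_unitSq.comap_apply, Set.image_univ, Subtype.range_coe,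
    Real.volume_Icc, sub_zero, ENNReal.ofReal_one]⟩

lemma integrable_coe_lam : Integrable (Subtype.val : UnitSq → ℝ) lam :=
  Integrable.of_bound continuous_subtype_val.aestronglyMeasurable 1
    (ae_of_all _ fun x => by rw [Real.norm_of_nonneg x.2.1]; exact x.2.2)

lemma measurableSet_Eopen : MeasurableSet Eopen :=
  measurableSet_lt (by fun_prop) (by fun_prop)

lemma measurableSet_Eclosed : MeasurableSet Eclosed :=
  measurableSet_le (by fun_prop) (by fun_prop)

section Objective

variable {π : Measure (UnitSq × UnitSq)}

lemma isProbabilityMeasure_of_map_fst_eq_lam (h : π.map Prod.fst = lam) :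
    IsProbabilityMeasure π :=
  ⟨by rw [← Measure.fst_univ, Measure.fst, h, measure_univ]⟩

lemma one_le_J (h : π.map Prod.fst = lam) : 1 ≤ J π := by
  have := isProbabilityMeasure_of_map_fst_eq_lam h
  have := Measure.isProbabilityMeasure_map (μ := π) measurable_snd.aemeasurable
  unfold J
  split_ifs with hac
  · exact one_le_lintegral_rnDeriv_sq hac
  · exact le_top

lemma map_snd_eq_lam_of_J_le_one (h : π.map Prod.fst = lam) (hJ : J π ≤ 1) :
    π.map Prod.snd = lam := by
  have := isProbabilityMeasure_of_map_fst_eq_lam h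
  have := Measure.isProbabilityMeasure_map (μ := π) measurable_snd.aemeasurable
  unfold J at hJ
  split_ifs at hJ with hac
  · exact eq_of_lintegral_rnDeriv_sq_le_one hac hJ
  · exact absurd hJ (by simp)

lemma J_eq_lintegral_sq {f : UnitSq → ℝ≥0∞} (hf : Measurable f)
    (h : π.map Prod.snd = lam.withDensity f) : J π = ∫⁻ y, f y ^ 2 ∂lam := by
  rw [J, h, if_pos (withDensity_absolutelyContinuous lam f)]
  refine lintegral_congr_ae ?_
  filter_upwards [Measure.rnDeriv_withDensity lam hf] with y hy
  rw [hy]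

end Objective

lemma map_fst_ne_map_snd_of_ae_lt {X : Type*} [MeasurableSpace X] {π : Measure (X × X)}
    [NeZero π] {F : X → ℝ} (hF : Integrable F (π.map Prod.fst))
    (hlt : ∀ᵐ p ∂π, F p.1 < F p.2) : π.map Prod.fst ≠ π.map Prod.snd := by
  intro h
  have h1 : Integrable (fun p => F p.1) π := hF.comp_measurable measurable_fst
  have h2 : Integrable (fun p => F p.2) π := (h ▸ hF).comp_measurable measurable_snd
  have hzero : ∫ p, (F p.2 - F p.1) ∂π = 0 := by
    rw [integral_sub h2 h1, ← integral_map measurable_snd.aemeasurable (h ▸ hF).1,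
      ← integral_map measurable_fst.aemeasurable hF.1, h, sub_self]
  have hae : (fun p => F p.2 - F p.1) =ᵐ[π] 0 :=
    (integral_eq_zero_iff_of_nonneg_ae (hlt.mono fun p hp => (sub_pos.2 hp).le)
      (h2.sub h1)).1 hzero
  obtain ⟨p, hp, hp0⟩ := (hlt.and hae).exists
  exact (sub_pos.2 hp).ne' hp0

lemma J_ne_one_of_mem_planS_Eopen {π : Measure (UnitSq × UnitSq)} (hπ : π ∈ PlanS Eopen) :
    J π ≠ 1 := by
  obtain ⟨-, hfst, hE⟩ := hπ
  intro hJ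
  have := isProbabilityMeasure_of_map_fst_eq_lam hfst
  exact map_fst_ne_map_snd_of_ae_lt (F := Subtype.val) (hfst ▸ integrable_coe_lam) (ae_iff.2 hE)
    (hfst.trans (map_snd_eq_lam_of_J_le_one hfst hJ.le).symm)

section GraphPlan

variable {X Y : Type*} [MeasurableSpace X] [MeasurableSpace Y]

def graphPlan (μ : Measure X) (T : X → Y) : Measure (X × Y) := μ.map fun x => (x, T x)

variable {μ : Measure X} {T : X → Y}

lemma measurable_graph (hT : Measurable T) : Measurable fun x => (x, T x) :=
  measurable_id.prodMk hT

lemma graphPlan_map_fst (hT : Measurable T) : (graphPlan μ T).map Prod.fst = μ := by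
  rw [graphPlan, Measure.map_map measurable_fst (measurable_graph hT)]
  exact Measure.map_id

lemma graphPlan_map_snd (hT : Measurable T) : (graphPlan μ T).map Prod.snd = μ.map T := by
  rw [graphPlan, Measure.map_map measurable_snd (measurable_graph hT)]
  rfl

lemma tendsto_integral_graphPlan [TopologicalSpace X] [TopologicalSpace Y]
    [OpensMeasurableSpace (X × Y)] [IsFiniteMeasure μ] {ι : Type*} {l : Filter ι}
    [l.IsCountablyGenerated] {T : ι → X → Y} {T₀ : X → Y} (hT : ∀ i, Measurable (T i))
    (hT₀ : Measurable T₀) (hlim : ∀ x, Tendsto (fun i => T i x) l (𝓝 (T₀ x))) (g : X × Y →ᵇ ℝ) :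
    Tendsto (fun i => ∫ q, g q ∂graphPlan μ (T i)) l (𝓝 (∫ q, g q ∂graphPlan μ T₀)) := by
  have hint (S : X → Y) (hS : Measurable S) : ∫ q, g q ∂graphPlan μ S = ∫ x, g (x, S x) ∂μ :=
    integral_map (measurable_graph hS).aemeasurable g.continuous.aestronglyMeasurable
  rw [funext fun i => hint _ (hT i), hint _ hT₀]
  refine tendsto_integral_filter_of_dominated_convergence (fun _ => ‖g‖)
    (Eventually.of_forall fun i =>
      (g.continuous.measurable.comp (measurable_graph (hT i))).aestronglyMeasurable)
    (Eventually.of_forall fun i => ae_of_all _ fun x => g.norm_coe_le_norm _)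
    (integrable_const _) (ae_of_all _ fun x => ?_)
  exact (g.continuous.tendsto _).comp (tendsto_const_nhds.prodMk_nhds (hlim x))

end GraphPlan

lemma graphPlan_mem_planS {T : UnitSq → UnitSq} (hT : Measurable T) {S : Set (UnitSq × UnitSq)}
    (hS : MeasurableSet S) (h : ∀ᵐ x ∂lam, (x, T x) ∈ S) : graphPlan lam T ∈ PlanS S :=
  ⟨by unfold graphPlan; infer_instance, graphPlan_map_fst hT, by
    rw [graphPlan, Measure.map_apply (measurable_graph hT) hS.compl]; exact ae_iff.1 h⟩

lemma map_volume_restrict_unitInterval_affine (a : ℝ) {c : ℝ} (hc : 0 < c) :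
    (volume.restrict (Set.Icc (0 : ℝ) 1)).map (fun x => a + c * x)
      = ENNReal.ofReal c⁻¹ • volume.restrict (Set.Icc a (a + c)) := by
  have hA : Measurable fun x : ℝ => a + c * x := by fun_prop
  have hpre : (fun x : ℝ => a + c * x) ⁻¹' Set.Icc a (a + c) = Set.Icc 0 1 := by
    ext x
    simp only [Set.mem_preimage, Set.mem_Icc]
    constructor <;> rintro ⟨h0, h1⟩ <;> constructor <;> nlinarith
  have hvol : volume.map (fun x : ℝ => a + c * x) = ENNReal.ofReal c⁻¹ • volume := by
    rw [show (fun x : ℝ => a + c * x) = (a + ·) ∘ (c * ·) from rfl,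
      ← Measure.map_map (measurable_const_add a) (measurable_const_mul c),
      Real.map_volume_mul_left hc.ne', Measure.map_smul, map_add_left_eq_self,
      abs_of_pos (inv_pos.2 hc)]
  rw [← hpre, ← Measure.restrict_map hA measurableSet_Icc, hvol, Measure.restrict_smul]

def contraction (c : ℝ) (x : UnitSq) : UnitSq := Set.projIcc 0 1 zero_le_one (1 - c + c * x)

section Contraction

variable {c : ℝ}

lemma coe_contraction (hc0 : 0 ≤ c) (hc1 : c ≤ 1) (x : UnitSq) :
    (contraction c x : ℝ) = 1 - c + c * x :=
  congrArg Subtype.val <|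
    Set.projIcc_of_mem _ ⟨by nlinarith [x.2.1], by nlinarith [x.2.2]⟩

lemma continuous_contraction : Continuous fun p : ℝ × UnitSq => contraction p.1 p.2 :=
  continuous_projIcc.comp (by fun_prop)

lemma measurable_contraction (c : ℝ) : Measurable (contraction c) :=
  (continuous_contraction.comp (Continuous.prodMk_right c)).measurable

lemma contraction_one : contraction 1 = id :=
  funext fun x => Subtype.ext <| by simp [coe_contraction zero_le_one le_rfl]

lemma lam_map_contraction (hc0 : 0 < c) (hc1 : c ≤ 1) :
    lam.map (contraction c)
      = ENNReal.ofReal c⁻¹ • lam.restrict (Subtype.val ⁻¹' Set.Icc (1 - c) 1) := by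
  refine measurableEmbedding_coe_unitSq.map_injective ?_
  have hcoe : Subtype.val ∘ contraction c = (fun x => 1 - c + c * x) ∘ Subtype.val :=
    funext (coe_contraction hc0.le hc1)
  rw [Measure.map_map measurable_subtype_coe (measurable_contraction c), hcoe,
    ← Measure.map_map (by fun_prop) measurable_subtype_coe, map_coe_lam,
    map_volume_restrict_unitInterval_affine _ hc0, sub_add_cancel, Measure.map_smul,
    ← measurableEmbedding_coe_unitSq.restrict_map, map_coe_lam,
    Measure.restrict_restrict measurableSet_Icc,
    Set.inter_eq_self_of_subset_left (Set.Icc_subset_Icc (by linarith) le_rfl)]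

lemma J_graphPlan_contraction (hc0 : 0 < c) (hc1 : c ≤ 1) :
    J (graphPlan lam (contraction c)) = ENNReal.ofReal c⁻¹ := by
  set P : Set UnitSq := Subtype.val ⁻¹' Set.Icc (1 - c) 1
  set f : UnitSq → ℝ≥0∞ := P.indicator fun _ => ENNReal.ofReal c⁻¹
  have hP : MeasurableSet P := measurable_subtype_coe measurableSet_Icc
  have hf : Measurable f := measurable_const.indicator hP
  have hmap : lam.map (contraction c) = lam.withDensity f := by
    rw [lam_map_contraction hc0 hc1, withDensity_indicator hP, withDensity_const]
  have hrange (x : UnitSq) : f (contraction c x) = ENNReal.ofReal c⁻¹ :=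
    Set.indicator_of_mem (show contraction c x ∈ P from
      ⟨by rw [coe_contraction hc0.le hc1]; nlinarith [x.2.1], (contraction c x).2.2⟩) _
  rw [J_eq_lintegral_sq hf ((graphPlan_map_snd (measurable_contraction c)).trans hmap)]
  -- `∫ f² dλ = ∫ f d(f λ)`, and `f λ` is the image of `λ`, on whose range `f ≡ 1 / c`
  calc ∫⁻ y, f y ^ 2 ∂lam = ∫⁻ y, f y ∂lam.withDensity f := by
        rw [lintegral_withDensity_eq_lintegral_mul _ hf hf]
        simp only [Pi.mul_apply, sq]
    _ = ∫⁻ x, f (contraction c x) ∂lam := by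
        rw [← hmap, lintegral_map hf (measurable_contraction c)]
    _ = ENNReal.ofReal c⁻¹ := by simp only [hrange, lintegral_const, measure_univ, mul_one]

lemma graphPlan_contraction_mem_planS_Eopen (hc0 : 0 ≤ c) (hc1 : c < 1) :
    graphPlan lam (contraction c) ∈ PlanS Eopen := by
  refine graphPlan_mem_planS (measurable_contraction c) measurableSet_Eopen ?_
  have hne : ∀ᵐ x : UnitSq ∂lam, (x : ℝ) ≠ 1 :=
    measurableEmbedding_coe_unitSq.ae_map_iff.1 <| by
      rw [map_coe_lam]; exact ae_restrict_of_ae (volume.ae_ne 1)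
  filter_upwards [hne] with x hx
  change (x : ℝ) < contraction c x
  rw [coe_contraction hc0 hc1.le]
  nlinarith [lt_of_le_of_ne x.2.2 hx]

lemma graphPlan_contraction_one : graphPlan lam (contraction 1) = diagPlan := by
  rw [contraction_one]
  rfl

lemma tendsto_integral_graphPlan_contraction {ι : Type*} {l : Filter ι} [l.IsCountablyGenerated]
    {c : ι → ℝ} (hc : Tendsto c l (𝓝 1)) (g : UnitSq × UnitSq →ᵇ ℝ) :
    Tendsto (fun i => ∫ q, g q ∂graphPlan lam (contraction (c i))) l
      (𝓝 (∫ q, g q ∂diagPlan)) := by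
  have hlim (x : UnitSq) : Tendsto (fun i => contraction (c i) x) l (𝓝 (contraction 1 x)) :=
    ((continuous_contraction.tendsto (1, x)).comp (hc.prodMk_nhds tendsto_const_nhds) :)
  rw [← graphPlan_contraction_one]
  exact tendsto_integral_graphPlan (fun i => measurable_contraction (c i))
    (measurable_contraction 1) hlim g

end Contraction

lemma sInf_J_planS_Eopen_le_one : sInf (J '' PlanS Eopen) ≤ 1 := by
  have hlim : Tendsto (fun c : ℝ => ENNReal.ofReal c⁻¹) (𝓝[<] 1) (𝓝 1) := by
    simpa [Function.comp_def] using ((ENNReal.continuous_ofReal.tendsto _).comp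
      (tendsto_inv₀ one_ne_zero)).mono_left nhdsWithin_le_nhds
  refine ge_of_tendsto hlim ?_
  filter_upwards [Ioo_mem_nhdsLT zero_lt_one] with c hc
  exact sInf_le ⟨_, graphPlan_contraction_mem_planS_Eopen hc.1.le hc.2,
    J_graphPlan_contraction hc.1 hc.2.le⟩

lemma diagPlan_mem_planS_Eclosed : diagPlan ∈ PlanS Eclosed :=
  graphPlan_mem_planS measurable_id measurableSet_Eclosed (ae_of_all _ fun x => le_refl (x : ℝ))

lemma J_diagPlan : J diagPlan = 1 := by
  rw [← graphPlan_contraction_one, J_graphPlan_contraction one_pos le_rfl, inv_one,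
    ENNReal.ofReal_one]

theorem failure_of_attainment_on_nonclosed_relation :
    -- (1) infimum 1 on the open relation, not attained
    (sInf (J '' PlanS Eopen) = 1 ∧ ∀ π ∈ PlanS Eopen, J π ≠ 1) ∧
    -- (2) an explicit minimizing family converging weakly to the diagonal plan
    (∃ f : ℝ → Measure (UnitSq × UnitSq),
      (∀ ε : ℝ, 0 < ε → ε < 1 / 2 →
        f ε ∈ PlanS Eopen ∧ J (f ε) = 1 + ENNReal.ofReal (7 / 6 * ε)) ∧
      (∀ g : UnitSq × UnitSq → ℝ, Continuous g →
        Filter.Tendsto (fun ε : ℝ => ∫ q, g q ∂(f ε)) (nhdsWithin 0 (Set.Ioi 0))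
          (nhds (∫ q, g q ∂diagPlan)))) ∧
    -- (3) the diagonal plan attains the minimum on the closed relation
    (diagPlan ∈ PlanS Eclosed ∧ J diagPlan = 1 ∧ ∀ π ∈ PlanS Eclosed, 1 ≤ J π) := by
  have hc : Tendsto (fun ε : ℝ => (1 + 7 / 6 * ε)⁻¹) (𝓝[>] 0) (𝓝 1) := by
    have : ContinuousAt (fun ε : ℝ => (1 + 7 / 6 * ε)⁻¹) 0 := by fun_prop (disch := norm_num)
    simpa using this.tendsto.mono_left nhdsWithin_le_nhds
  refine ⟨⟨le_antisymm sInf_J_planS_Eopen_le_one (le_sInf ?_),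
      fun π hπ => J_ne_one_of_mem_planS_Eopen hπ⟩,
    ⟨fun ε => graphPlan lam (contraction (1 + 7 / 6 * ε)⁻¹), fun ε hε _ => ⟨?_, ?_⟩,
      fun g hg => tendsto_integral_graphPlan_contraction hc (.mkOfCompact ⟨g, hg⟩)⟩,
    diagPlan_mem_planS_Eclosed, J_diagPlan, fun π hπ => one_le_J hπ.2.1⟩
  · rintro _ ⟨π, hπ, rfl⟩
    exact one_le_J hπ.2.1
  · exact graphPlan_contraction_mem_planS_Eopen (by positivity)
      (inv_lt_one_of_one_lt₀ (by linarith))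
  · rw [J_graphPlan_contraction (by positivity) (inv_le_one_of_one_le₀ (by linarith)), inv_inv,
      ENNReal.ofReal_add zero_le_one (by positivity), ENNReal.ofReal_one]
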